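/- arXiv:2302.00664 — 9 statements merged into one kernel-verified Lean document; each statement's English description precedes it below -/
import Mathlib

section
/- Let 1 < p < ∞ and let r_p ∈ (0,1) satisfy 1 - r_p - r_p^p = 0. Then for all x ∈ (0, r_p), (1 - x^p)^p > 1 - x. -/
/-!
With `φ t = 1 - t ^ p` the claim reads `φ (φ x) < x`, i.e. `iterateGap p x = x - φ (φ x) > 0`.
The gap vanishes at `0`, `r_p` (the fixed point of `φ`) and `1`, so by Rolle its derivative
`1 - p ^ 2 * m x ^ (p - 1)`, where `m x = x * (1 - x ^ p)`, vanishes at some `ξ₁ ∈ (0, r_p)` and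
`ξ₂ ∈ (r_p, 1)`, whence `m ξ₁ = m ξ₂`. Since `m` is strictly concave, `m < m ξ₁` on `(0, ξ₁)` and
`m > m ξ₁` on `(ξ₁, ξ₂)`: the gap strictly increases from `0` on `[0, ξ₁]` and strictly decreases
to `0` on `[ξ₁, r_p]`.
-/

open Set

lemma StrictConcaveOn.apply_lt_of_lt_of_eq {s : Set ℝ} {f : ℝ → ℝ} (hf : StrictConcaveOn ℝ s f)
    {x a b : ℝ} (hx : x ∈ s) (hb : b ∈ s) (hxa : x < a) (hab : a < b) (heq : f a = f b) :
    f x < f a := by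
  have h := hf.lt_on_openSegment hx hb (hxa.trans hab).ne
    (by rw [openSegment_eq_Ioo (hxa.trans hab)]; exact ⟨hxa, hab⟩)
  rwa [← heq, min_lt_iff, lt_self_iff_false, or_false] at h

lemma StrictConcaveOn.lt_apply_of_mem_Ioo_of_eq {s : Set ℝ} {f : ℝ → ℝ}
    (hf : StrictConcaveOn ℝ s f) {a b y : ℝ} (ha : a ∈ s) (hb : b ∈ s) (hy : y ∈ Ioo a b)
    (heq : f a = f b) : f a < f y := by
  have h := hf.lt_on_openSegment ha hb (hy.1.trans hy.2).ne
    (by rwa [openSegment_eq_Ioo (hy.1.trans hy.2)])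
  rwa [← heq, min_self] at h

noncomputable def iterateGap (p x : ℝ) : ℝ := (1 - x ^ p) ^ p + x - 1

section

variable {p : ℝ}

lemma iterateGap_zero (hp : 0 < p) : iterateGap p 0 = 0 := by
  simp [iterateGap, Real.zero_rpow hp.ne']

lemma iterateGap_one (hp : 0 < p) : iterateGap p 1 = 0 := by
  simp [iterateGap, Real.zero_rpow hp.ne']

lemma iterateGap_eq_zero_of_sub_sub_rpow_eq_zero {r : ℝ} (hr : 1 - r - r ^ p = 0) :
    iterateGap p r = 0 := by
  have h : 1 - r ^ p = r := by linarith
  simp only [iterateGap, h]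
  linarith

lemma continuous_iterateGap (hp : 0 ≤ p) : Continuous (iterateGap p) := by
  unfold iterateGap
  fun_prop (disch := exact hp)

lemma hasDerivAt_iterateGap (hp : 0 < p) {x : ℝ} (hx : x ∈ Ioo 0 1) :
    HasDerivAt (iterateGap p) (1 - p ^ 2 * (x * (1 - x ^ p)) ^ (p - 1)) x := by
  have hx' : 0 < 1 - x ^ p := sub_pos.2 (Real.rpow_lt_one hx.1.le hx.2 hp)
  have h : HasDerivAt (fun y => (1 - y ^ p) ^ p + y - 1)
      (-(p * x ^ (p - 1)) * p * (1 - x ^ p) ^ (p - 1) + 1) x :=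
    ((((Real.hasDerivAt_rpow_const (Or.inl hx.1.ne')).const_sub 1).rpow_const
      (p := p) (Or.inl hx'.ne')).add (hasDerivAt_id x)).sub_const 1
  refine h.congr_deriv ?_
  rw [Real.mul_rpow hx.1.le hx'.le]
  ring

lemma mul_one_sub_rpow_nonneg (hp : 0 < p) {x : ℝ} (hx : x ∈ Icc 0 1) :
    0 ≤ x * (1 - x ^ p) :=
  mul_nonneg hx.1 (sub_nonneg.2 (Real.rpow_le_one hx.1 hx.2 hp.le))

lemma strictConcaveOn_mul_one_sub_rpow (hp : 0 < p) :
    StrictConcaveOn ℝ (Ici 0) fun x : ℝ => x * (1 - x ^ p) := by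
  refine ((concaveOn_id (convex_Ici 0)).sub_strictConvexOn
    (strictConvexOn_rpow (p := p + 1) (by linarith))).congr fun x hx => ?_
  simp only [Pi.sub_apply, id, Real.rpow_add' hx (by linarith : p + 1 ≠ 0), Real.rpow_one]
  ring

lemma strictAntiOn_one_sub_mul_rpow (hp : 1 < p) {c : ℝ} (hc : 0 < c) :
    StrictAntiOn (fun u : ℝ => 1 - c * u ^ (p - 1)) (Ici 0) := fun _ hu _ _ huv =>
  sub_lt_sub_left (mul_lt_mul_of_pos_left (Real.rpow_lt_rpow hu huv (by linarith)) hc) 1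

lemma strictMonoOn_iterateGap (hp : 1 < p) {ξ₁ ξ₂ : ℝ} (hξ₁ : 0 < ξ₁) (h₁₂ : ξ₁ < ξ₂)
    (hξ₂ : ξ₂ < 1) (hcrit : 1 - p ^ 2 * (ξ₁ * (1 - ξ₁ ^ p)) ^ (p - 1) = 0)
    (hlevel : ξ₁ * (1 - ξ₁ ^ p) = ξ₂ * (1 - ξ₂ ^ p)) : StrictMonoOn (iterateGap p) (Icc 0 ξ₁) := by
  have hp0 : 0 < p := by linarith
  refine strictMonoOn_of_hasDerivWithinAt_pos (convex_Icc 0 ξ₁)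
    (continuous_iterateGap hp0.le).continuousOn
    (fun y hy => (hasDerivAt_iterateGap hp0 ?_).hasDerivWithinAt) fun y hy => ?_
  all_goals rw [interior_Icc] at hy
  · exact ⟨hy.1, hy.2.trans (h₁₂.trans hξ₂)⟩
  have hlt : y * (1 - y ^ p) < ξ₁ * (1 - ξ₁ ^ p) :=
    (strictConcaveOn_mul_one_sub_rpow hp0).apply_lt_of_lt_of_eq hy.1.le (hξ₁.trans h₁₂).le hy.2
      h₁₂ hlevel
  rw [← hcrit]
  exact strictAntiOn_one_sub_mul_rpow hp (by positivity)
    (mul_one_sub_rpow_nonneg hp0 ⟨hy.1.le, (hy.2.trans (h₁₂.trans hξ₂)).le⟩)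
    (mul_one_sub_rpow_nonneg hp0 ⟨hξ₁.le, (h₁₂.trans hξ₂).le⟩) hlt

lemma strictAntiOn_iterateGap (hp : 1 < p) {ξ₁ ξ₂ : ℝ} (hξ₁ : 0 < ξ₁) (h₁₂ : ξ₁ < ξ₂)
    (hξ₂ : ξ₂ < 1) (hcrit : 1 - p ^ 2 * (ξ₁ * (1 - ξ₁ ^ p)) ^ (p - 1) = 0)
    (hlevel : ξ₁ * (1 - ξ₁ ^ p) = ξ₂ * (1 - ξ₂ ^ p)) :
    StrictAntiOn (iterateGap p) (Icc ξ₁ ξ₂) := by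
  have hp0 : 0 < p := by linarith
  refine strictAntiOn_of_hasDerivWithinAt_neg (convex_Icc ξ₁ ξ₂)
    (continuous_iterateGap hp0.le).continuousOn
    (fun y hy => (hasDerivAt_iterateGap hp0 ?_).hasDerivWithinAt) fun y hy => ?_
  all_goals rw [interior_Icc] at hy
  · exact ⟨hξ₁.trans hy.1, hy.2.trans hξ₂⟩
  have hlt : ξ₁ * (1 - ξ₁ ^ p) < y * (1 - y ^ p) :=
    (strictConcaveOn_mul_one_sub_rpow hp0).lt_apply_of_mem_Ioo_of_eq hξ₁.le
      (hξ₁.trans h₁₂).le hy hlevel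
  rw [← hcrit]
  exact strictAntiOn_one_sub_mul_rpow hp (by positivity)
    (mul_one_sub_rpow_nonneg hp0 ⟨hξ₁.le, (h₁₂.trans hξ₂).le⟩)
    (mul_one_sub_rpow_nonneg hp0 ⟨(hξ₁.trans hy.1).le, (hy.2.trans hξ₂).le⟩) hlt

theorem iterateGap_pos (hp : 1 < p) {r : ℝ} (hr : r ∈ Ioo 0 1) (hroot : 1 - r - r ^ p = 0)
    {x : ℝ} (hx : x ∈ Ioo 0 r) : 0 < iterateGap p x := by
  have hp0 : 0 < p := by linarith
  have hcont := continuous_iterateGap hp0.le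
  have hr0 := iterateGap_eq_zero_of_sub_sub_rpow_eq_zero hroot
  obtain ⟨ξ₁, hξ₁, hcrit₁⟩ := exists_hasDerivAt_eq_zero hr.1 hcont.continuousOn
    ((iterateGap_zero hp0).trans hr0.symm)
    fun y hy => hasDerivAt_iterateGap hp0 ⟨hy.1, hy.2.trans hr.2⟩
  obtain ⟨ξ₂, hξ₂, hcrit₂⟩ := exists_hasDerivAt_eq_zero hr.2 hcont.continuousOn
    (hr0.trans (iterateGap_one hp0).symm)
    fun y hy => hasDerivAt_iterateGap hp0 ⟨hr.1.trans hy.1, hy.2⟩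
  have h₁₂ : ξ₁ < ξ₂ := hξ₁.2.trans hξ₂.1
  have hlevel : ξ₁ * (1 - ξ₁ ^ p) = ξ₂ * (1 - ξ₂ ^ p) :=
    (strictAntiOn_one_sub_mul_rpow hp (by positivity : 0 < p ^ 2)).injOn
      (mul_one_sub_rpow_nonneg hp0 ⟨hξ₁.1.le, (h₁₂.trans hξ₂.2).le⟩)
      (mul_one_sub_rpow_nonneg hp0 ⟨(hξ₁.1.trans h₁₂).le, hξ₂.2.le⟩) (hcrit₁.trans hcrit₂.symm)
  rcases le_or_gt x ξ₁ with hxξ | hξx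
  · rw [← iterateGap_zero hp0]
    exact strictMonoOn_iterateGap hp hξ₁.1 h₁₂ hξ₂.2 hcrit₁ hlevel ⟨le_rfl, hξ₁.1.le⟩
      ⟨hx.1.le, hxξ⟩ hx.1
  · rw [← hr0]
    exact strictAntiOn_iterateGap hp hξ₁.1 h₁₂ hξ₂.2 hcrit₁ hlevel ⟨hξx.le, (hx.2.trans hξ₂.1).le⟩
      ⟨hξ₁.2.le, hξ₂.1.le⟩ hx.2

end

/-- For `1 < p`, if `r_p ∈ (0,1)` satisfies `1 - r_p - r_p^p = 0`, then for all
`x ∈ (0, r_p)` we have `(1 - x^p)^p > 1 - x`. -/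
theorem stmt2 (p : ℝ) (hp : 1 < p) (rp : ℝ) (hrp : rp ∈ Set.Ioo (0 : ℝ) 1)
    (hroot : 1 - rp - rp ^ p = 0) :
    ∀ x ∈ Set.Ioo (0 : ℝ) rp, (1 - x ^ p) ^ p > 1 - x := fun x hx => by
  have h := iterateGap_pos hp hrp hroot hx
  unfold iterateGap at h
  linarith
end

section
/- For vectors x, y in ℝⁿ all of whose components lie in {-1, 0, 1}, and for any 1 < p < ∞, x is Birkhoff-James orthogonal to y in l^n_p if and only if x and y are orthogonal in the Euclidean sense (their standard dot product is zero). -/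
open Finset

/-!
Along the line `l ↦ x + l • y` the `p`-th power of the norm, `∑ j, |x j + l * y j| ^ p`, is a
convex differentiable function of `l`. Hence `x ⊥_B y` iff its derivative at `0`,
`p * ∑ j, |x j| ^ (p - 2) * x j * y j`, vanishes; for `x j ∈ {-1, 0, 1}` the weight
`|x j| ^ (p - 2) * x j` is just `x j`.
-/

/-- The `p`-norm on `ℝⁿ`. -/
noncomputable def pnorm (p : ℝ) {n : ℕ} (x : Fin n → ℝ) : ℝ :=
  (∑ j, |x j| ^ p) ^ (1 / p)

/-- Birkhoff-James orthogonality in `l^n_p`. -/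
def BJOrth (p : ℝ) {n : ℕ} (x y : Fin n → ℝ) : Prop :=
  ∀ l : ℝ, pnorm p x ≤ pnorm p (x + l • y)

lemma convexOn_abs_rpow {p : ℝ} (hp : 1 ≤ p) : ConvexOn ℝ Set.univ fun t : ℝ ↦ |t| ^ p := by
  refine ⟨convex_univ, fun s _ t _ a b ha hb hab ↦ ?_⟩
  have hp0 : 0 ≤ p := by linarith
  calc |a • s + b • t| ^ p ≤ (a • |s| + b • |t|) ^ p := by
        gcongr
        simpa [smul_eq_mul, abs_mul, abs_of_nonneg ha, abs_of_nonneg hb] using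
          abs_add_le (a * s) (b * t)
    _ ≤ a • |s| ^ p + b • |t| ^ p :=
        (convexOn_rpow hp).2 (abs_nonneg s) (abs_nonneg t) ha hb hab

lemma ConvexOn.fun_sum {ι : Type*} {s : Set ℝ} (t : Finset ι) {f : ι → ℝ → ℝ}
    (hs : Convex ℝ s) (hf : ∀ i ∈ t, ConvexOn ℝ s (f i)) :
    ConvexOn ℝ s fun l ↦ ∑ i ∈ t, f i l := by
  convert Finset.sum_induction f (ConvexOn ℝ s) (fun _ _ ↦ ConvexOn.add) (convexOn_const 0 hs) hf
  simp

lemma ConvexOn.isMinOn_univ_iff_of_hasDerivAt {f : ℝ → ℝ} {f' x : ℝ}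
    (hf : ConvexOn ℝ Set.univ f) (hd : HasDerivAt f f' x) :
    IsMinOn f Set.univ x ↔ f' = 0 := by
  refine ⟨fun hmin ↦ (hmin.isLocalMin Filter.univ_mem).hasDerivAt_eq_zero hd, fun h ↦ ?_⟩
  refine hf.isMinOn_of_rightDeriv_eq_zero (by simp) ?_
  rw [hd.hasDerivWithinAt.derivWithin (uniqueDiffWithinAt_Ioi x), h]

section

variable {ι : Type*} [Fintype ι] {p : ℝ}

lemma convexOn_sum_abs_add_mul_rpow (hp : 1 ≤ p) (x y : ι → ℝ) :
    ConvexOn ℝ Set.univ fun l : ℝ ↦ ∑ j, |x j + l * y j| ^ p := by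
  refine ConvexOn.fun_sum _ convex_univ fun j _ ↦ ⟨convex_univ, fun l₁ _ l₂ _ a b ha hb hab ↦ ?_⟩
  have hline : x j + (a • l₁ + b • l₂) * y j = a • (x j + l₁ * y j) + b • (x j + l₂ * y j) := by
    simp only [smul_eq_mul]
    linear_combination (-x j) * hab
  dsimp only
  rw [hline]
  exact (convexOn_abs_rpow hp).2 trivial trivial ha hb hab

lemma hasDerivAt_sum_abs_add_mul_rpow (hp : 1 < p) (x y : ι → ℝ) :
    HasDerivAt (fun l : ℝ ↦ ∑ j, |x j + l * y j| ^ p)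
      (p * ∑ j, |x j| ^ (p - 2) * x j * y j) 0 := by
  rw [Finset.mul_sum]
  refine HasDerivAt.fun_sum fun j _ ↦ ?_
  have hline : HasDerivAt (fun l : ℝ ↦ x j + l * y j) (y j) 0 := by
    simpa using ((hasDerivAt_id (0 : ℝ)).mul_const (y j)).const_add (x j)
  simpa [mul_assoc, Function.comp_def] using (hasDerivAt_abs_rpow (x j + 0 * y j) hp).comp 0 hline

end

lemma pnorm_le_pnorm_iff {p : ℝ} {n : ℕ} (hp : 0 < p) (x z : Fin n → ℝ) :
    pnorm p x ≤ pnorm p z ↔ ∑ j, |x j| ^ p ≤ ∑ j, |z j| ^ p :=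
  Real.rpow_le_rpow_iff (sum_nonneg fun _ _ ↦ by positivity) (sum_nonneg fun _ _ ↦ by positivity)
    (one_div_pos.2 hp)

-- `|t| ^ (p - 2) * t` is the usual weight `sign t * |t| ^ (p - 1)`, also at `t = 0`.
theorem bjOrth_iff_sum_abs_rpow_mul_eq_zero {p : ℝ} {n : ℕ} (hp : 1 < p) (x y : Fin n → ℝ) :
    BJOrth p x y ↔ ∑ j, |x j| ^ (p - 2) * x j * y j = 0 := by
  have hmin : BJOrth p x y ↔ IsMinOn (fun l ↦ ∑ j, |x j + l * y j| ^ p) Set.univ 0 := by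
    simp [BJOrth, pnorm_le_pnorm_iff (zero_lt_one.trans hp), isMinOn_univ_iff, mul_comm]
  rw [hmin, (convexOn_sum_abs_add_mul_rpow hp.le x y).isMinOn_univ_iff_of_hasDerivAt
    (hasDerivAt_sum_abs_add_mul_rpow hp x y), mul_eq_zero, or_iff_right (by positivity)]

lemma abs_rpow_mul_self_of_eq_neg_one_or_zero_or_one {t : ℝ} (q : ℝ)
    (ht : t = -1 ∨ t = 0 ∨ t = 1) : |t| ^ q * t = t := by
  rcases ht with rfl | rfl | rfl <;> simp

theorem stmt6_general {n : ℕ} (p : ℝ) (hp : 1 < p) (x y : Fin n → ℝ)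
    (hxc : ∀ j, x j = -1 ∨ x j = 0 ∨ x j = 1) :
    BJOrth p x y ↔ ∑ j, x j * y j = 0 := by
  simp only [bjOrth_iff_sum_abs_rpow_mul_eq_zero hp,
    abs_rpow_mul_self_of_eq_neg_one_or_zero_or_one _ (hxc _)]

/-- For vectors with components in `{-1, 0, 1}` and `1 < p < ∞`, Birkhoff-James
orthogonality in `l^n_p` coincides with Euclidean orthogonality. -/
theorem stmt6 {n : ℕ} (p : ℝ) (hp : 1 < p) (x y : Fin n → ℝ) (hx : x ≠ 0)
    (hxc : ∀ j, x j = -1 ∨ x j = 0 ∨ x j = 1) (hyc : ∀ j, y j = -1 ∨ y j = 0 ∨ y j = 1) :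
    BJOrth p x y ↔ ∑ j, x j * y j = 0 :=
  stmt6_general p hp x y hxc
end

section
/- For 1 < p < ∞ with p ≠ 2, any Auerbach basis of l^2_p is equivalent (up to permutation of rows/columns and sign changes of rows/columns) to either the standard basis {(1,0),(0,1)} or the basis {(2^{-1/p}, 2^{-1/p}), (2^{-1/p}, -2^{-1/p})}. -/
/-!
Birkhoff–James orthogonality of `x` to `y` in `ℓ_p`, `1 < p`, means that `t ↦ ‖x + t y‖_p ^ p`
is minimal at `0`, so `∑ |x_j| ^ (p - 2) x_j y_j = 0`. For an Auerbach basis with rows `(a, b)`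
and `(c, d)` this gives two equations in the entries, besides `|a|^p + |b|^p = |c|^p + |d|^p = 1`.
If some entry vanishes they force a signed permutation matrix. Otherwise, taking absolute values
and multiplying the two equations gives `(|a| |c|) ^ p = (|b| |d|) ^ p`, hence
`|a| ^ (p - 2) = |b| ^ (p - 2)`, and `p ≠ 2` yields `|a| = |b|`, `|c| = |d|`. So every entry has
modulus `2 ^ (-1/p)`, and the equations reduce to `a c + b d = 0`, which fixes the signs up to
equivalence.
-/

open Finset

/-- `v` (rows of a matrix) is an Auerbach basis of `l^n_p`: a basis of unit vectors each
Birkhoff-James orthogonal to the span of the remaining basis vectors. -/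
def IsAuerbach (p : ℝ) {n : ℕ} (v : Fin n → Fin n → ℝ) : Prop :=
  LinearIndependent ℝ v ∧ ∀ i, pnorm p (v i) = 1 ∧
    ∀ w ∈ Submodule.span ℝ (v '' {j | j ≠ i}), pnorm p (v i) ≤ pnorm p (v i + w)

/-- Two bases (as matrices of row vectors) are equivalent if one is obtained from the other
by permuting rows or columns and negating rows or columns. -/
def EquivBases {n : ℕ} (A B : Fin n → Fin n → ℝ) : Prop :=
  ∃ (σ τ : Equiv.Perm (Fin n)) (ε δ : Fin n → ℝ),
    (∀ i, ε i = 1 ∨ ε i = -1) ∧ (∀ j, δ j = 1 ∨ δ j = -1) ∧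
    ∀ i j, B i j = ε i * δ j * A (σ i) (τ j)

open Real

theorem sum_abs_rpow_mul_eq_zero_of_pnorm_le {p : ℝ} (hp : 1 < p) {n : ℕ} (x y : Fin n → ℝ)
    (h : ∀ t : ℝ, pnorm p x ≤ pnorm p (x + t • y)) :
    ∑ j, |x j| ^ (p - 2) * x j * y j = 0 := by
  have hp0 : 0 < p := by linarith
  set g : ℝ → ℝ := fun t ↦ ∑ j, |x j + t * y j| ^ p with hg
  have hderiv : HasDerivAt g (∑ j, p * (|x j| ^ (p - 2) * x j * y j)) 0 := by
    refine HasDerivAt.fun_sum fun j _ ↦ ?_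
    have hline : HasDerivAt (fun t : ℝ ↦ x j + t * y j) (y j) 0 := by
      simpa using ((hasDerivAt_id (0 : ℝ)).mul_const (y j)).const_add (x j)
    have := (hasDerivAt_abs_rpow (x j + 0 * y j) hp).comp 0 hline
    simp only [zero_mul, add_zero] at this ⊢
    exact this.congr_deriv (by ring)
  have hmin : IsLocalMin g 0 := Filter.Eventually.of_forall fun t ↦ by
    have ht := h t
    simp only [pnorm, Pi.add_apply, Pi.smul_apply, smul_eq_mul] at ht
    rw [rpow_le_rpow_iff (by positivity) (by positivity) (by positivity)] at ht
    simpa [hg] using ht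
  have := hmin.hasDerivAt_eq_zero hderiv
  rw [← Finset.mul_sum] at this
  exact (mul_eq_zero.1 this).resolve_left hp0.ne'

theorem rpow_eq_one_iff_of_nonneg {x p : ℝ} (hx : 0 ≤ x) (hp : p ≠ 0) : x ^ p = 1 ↔ x = 1 := by
  simpa only [one_rpow] using rpow_left_inj hx zero_le_one (z := p) hp

namespace IsAuerbach

variable {p : ℝ} {n : ℕ} {v : Fin n → Fin n → ℝ}

theorem sum_abs_rpow_eq_one (hv : IsAuerbach p v) (hp : p ≠ 0) (i : Fin n) :
    ∑ k, |v i k| ^ p = 1 :=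
  (rpow_eq_one_iff_of_nonneg (by positivity) (one_div_ne_zero hp)).1 (hv.2 i).1

theorem sum_abs_rpow_mul_eq_zero (hv : IsAuerbach p v) (hp : 1 < p) {i j : Fin n}
    (hij : i ≠ j) : ∑ k, |v i k| ^ (p - 2) * v i k * v j k = 0 :=
  sum_abs_rpow_mul_eq_zero_of_pnorm_le hp _ _ fun t ↦ (hv.2 i).2 _ <|
    Submodule.smul_mem _ t (Submodule.subset_span ⟨j, hij.symm, rfl⟩)

end IsAuerbach

theorem eq_and_eq_of_rpow_sub_two_mul_eq {p A B C D : ℝ} (hp0 : p ≠ 0) (hp2 : p ≠ 2)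
    (hA : 0 < A) (hB : 0 < B) (hC : 0 < C) (hD : 0 < D)
    (h₁ : A ^ (p - 2) * (A * C) = B ^ (p - 2) * (B * D))
    (h₂ : C ^ (p - 2) * (A * C) = D ^ (p - 2) * (B * D)) : A = B ∧ C = D := by
  have hsplit : ∀ x y : ℝ, 0 < x → 0 < y →
      (x * y) ^ p = x ^ (p - 2) * (x * y) * (y ^ (p - 2) * (x * y)) := fun x y hx hy ↦ by
    rw [← sub_add_cancel p 2, rpow_add (by positivity), rpow_two, sub_add_cancel,
      mul_rpow hx.le hy.le]
    ring
  have hprod : A * C = B * D := by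
    rw [← rpow_left_inj (by positivity) (by positivity) hp0, hsplit A C hA hC,
      hsplit B D hB hD, h₁, h₂]
  rw [hprod] at h₁
  have hAB : A = B := (rpow_left_inj hA.le hB.le (sub_ne_zero.2 hp2)).1
    (mul_right_cancel₀ (by positivity) h₁)
  subst hAB
  exact ⟨rfl, mul_left_cancel₀ hA.ne' hprod⟩

theorem eq_two_rpow_neg_inv_of_rpow_add_rpow_eq_one {x p : ℝ} (hx : 0 ≤ x) (hp : p ≠ 0)
    (h : x ^ p + x ^ p = 1) : x = 2 ^ (-(1 / p)) := by
  have hxp : x ^ p = 2⁻¹ := by linarith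
  rw [← rpow_rpow_inv hx hp, hxp, inv_rpow zero_le_two, ← rpow_neg zero_le_two, one_div]

theorem eq_zero_and_abs_eq_one_of_eq_zero {p a b c d : ℝ} (hp : p ≠ 0)
    (hE : |a| ^ (p - 2) * a * c + |b| ^ (p - 2) * b * d = 0)
    (h₀ : |a| ^ p + |b| ^ p = 1) (h₁ : |c| ^ p + |d| ^ p = 1) (ha : a = 0) :
    d = 0 ∧ |b| = 1 ∧ |c| = 1 := by
  subst ha
  have hb : |b| = 1 := (rpow_eq_one_iff_of_nonneg (abs_nonneg b) hp).1 (by simpa [hp] using h₀)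
  have hd : d = 0 := by
    have hb0 : b ≠ 0 := by rintro rfl; simp at hb
    simpa [hb, hb0] using hE
  subst hd
  exact ⟨rfl, hb, (rpow_eq_one_iff_of_nonneg (abs_nonneg c) hp).1 (by simpa [hp] using h₁)⟩

theorem diag_or_antidiag_of_eq_zero {p a b c d : ℝ} (hp : p ≠ 0)
    (hE₁ : |a| ^ (p - 2) * a * c + |b| ^ (p - 2) * b * d = 0)
    (hE₂ : |c| ^ (p - 2) * c * a + |d| ^ (p - 2) * d * b = 0)
    (h₀ : |a| ^ p + |b| ^ p = 1) (h₁ : |c| ^ p + |d| ^ p = 1)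
    (hzero : a = 0 ∨ b = 0 ∨ c = 0 ∨ d = 0) :
    (b = 0 ∧ c = 0 ∧ |a| = 1 ∧ |d| = 1) ∨ (a = 0 ∧ d = 0 ∧ |b| = 1 ∧ |c| = 1) := by
  -- the system is invariant under swapping the rows and under swapping the columns
  rcases hzero with h | h | h | h
  · have := eq_zero_and_abs_eq_one_of_eq_zero hp hE₁ h₀ h₁ h
    exact Or.inr ⟨h, this⟩
  · have := eq_zero_and_abs_eq_one_of_eq_zero (a := b) (b := a) (c := d) (d := c) hp
      (by linarith) (by linarith) (by linarith) h
    exact Or.inl ⟨h, this⟩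
  · have := eq_zero_and_abs_eq_one_of_eq_zero hp hE₂ h₁ h₀ h
    exact Or.inl ⟨this.1, h, this.2.2, this.2.1⟩
  · have := eq_zero_and_abs_eq_one_of_eq_zero (a := d) (b := c) (c := b) (d := a) hp
      (by linarith) (by linarith) (by linarith) h
    exact Or.inr ⟨this.1, h, this.2.2, this.2.1⟩

theorem abs_eq_two_rpow_and_orthogonal {p a b c d : ℝ} (hp0 : p ≠ 0) (hp2 : p ≠ 2)
    (hE₁ : |a| ^ (p - 2) * a * c + |b| ^ (p - 2) * b * d = 0)
    (hE₂ : |c| ^ (p - 2) * c * a + |d| ^ (p - 2) * d * b = 0)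
    (h₀ : |a| ^ p + |b| ^ p = 1) (h₁ : |c| ^ p + |d| ^ p = 1)
    (ha : a ≠ 0) (hb : b ≠ 0) (hc : c ≠ 0) (hd : d ≠ 0) :
    |a| = 2 ^ (-(1 / p)) ∧ |b| = 2 ^ (-(1 / p)) ∧ |c| = 2 ^ (-(1 / p)) ∧
      |d| = 2 ^ (-(1 / p)) ∧ a * c + b * d = 0 := by
  have habs : ∀ x y z w : ℝ, |x| ^ (p - 2) * x * y + |z| ^ (p - 2) * z * w = 0 →
      |x| ^ (p - 2) * (|x| * |y|) = |z| ^ (p - 2) * (|z| * |w|) := fun x y z w h ↦ by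
    have := congrArg abs (eq_neg_of_add_eq_zero_left h)
    simpa only [abs_neg, abs_mul, abs_of_nonneg (rpow_nonneg (abs_nonneg _) _), mul_assoc]
      using this
  obtain ⟨hab, hcd⟩ := eq_and_eq_of_rpow_sub_two_mul_eq hp0 hp2 (abs_pos.2 ha) (abs_pos.2 hb)
    (abs_pos.2 hc) (abs_pos.2 hd) (habs a c b d hE₁)
    (by simpa only [mul_comm |a|, mul_comm |b|] using habs c a d b hE₂)
  have hta := eq_two_rpow_neg_inv_of_rpow_add_rpow_eq_one (abs_nonneg a) hp0 (hab ▸ h₀)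
  have htc := eq_two_rpow_neg_inv_of_rpow_add_rpow_eq_one (abs_nonneg c) hp0 (hcd ▸ h₁)
  refine ⟨hta, hab ▸ hta, htc, hcd ▸ htc, ?_⟩
  rw [← hab] at hE₁
  have hfactor : |a| ^ (p - 2) * (a * c + b * d) = 0 := by linear_combination hE₁
  exact (mul_eq_zero.1 hfactor).resolve_left (rpow_pos_of_pos (abs_pos.2 ha) _).ne'

theorem equivBases_one_of_abs_eq_one {n : ℕ} {v : Fin n → Fin n → ℝ} (σ : Equiv.Perm (Fin n))
    (hdiag : ∀ i, |v (σ i) i| = 1) (hoff : ∀ i j, i ≠ j → v (σ i) j = 0) :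
    EquivBases v (1 : Matrix (Fin n) (Fin n) ℝ) := by
  refine ⟨σ, 1, fun i ↦ v (σ i) i, 1, fun i ↦ abs_eq zero_le_one |>.1 (hdiag i),
    fun _ ↦ Or.inl rfl, fun i j ↦ ?_⟩
  by_cases hij : i = j
  · subst hij
    simp only [Matrix.one_apply_eq, Pi.one_apply, Equiv.Perm.one_apply, mul_one]
    rw [← abs_mul_abs_self, hdiag, one_mul]
  · simp [Matrix.one_apply_ne hij, hoff i j hij]

theorem equivBases_hadamard {t : ℝ} (ht : 0 < t) {v : Fin 2 → Fin 2 → ℝ}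
    (h00 : |v 0 0| = t) (h01 : |v 0 1| = t) (h10 : |v 1 0| = t) (h11 : |v 1 1| = t)
    (horth : v 0 0 * v 1 0 + v 0 1 * v 1 1 = 0) :
    EquivBases v ![![t, t], ![t, -t]] := by
  have hsign : ∀ x : ℝ, |x| = 1 → x = 1 ∨ x = -1 := fun x ↦ (abs_eq zero_le_one).1
  have hsq : ∀ x : ℝ, |x| = t → x * x = t * t := fun x hx ↦ by rw [← abs_mul_abs_self, hx]
  -- the signs make the first row and the first column of the transformed matrix equal to `t`
  refine ⟨1, 1, ![1, v 0 0 * v 1 0 / (t * t)], ![v 0 0 / t, v 0 1 / t], ?_, ?_, ?_⟩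
  · refine Fin.forall_fin_two.2 ⟨Or.inl rfl, hsign _ ?_⟩
    simp [abs_div, abs_mul, h00, h10, abs_of_pos ht, ht.ne']
  · refine Fin.forall_fin_two.2 ⟨hsign _ ?_, hsign _ ?_⟩ <;>
      simp [abs_div, h00, h01, abs_of_pos ht, ht.ne']
  · have ha := hsq _ h00
    have hb := hsq _ h01
    have hc := hsq _ h10
    have hd := hsq _ h11
    simp only [Matrix.cons_val', Matrix.cons_val_fin_one, Equiv.Perm.coe_one, id_eq,
      Fin.forall_fin_two, Matrix.cons_val_zero, Matrix.cons_val_one, one_mul]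
    field_simp
    refine ⟨⟨?_, ?_⟩, ?_, ?_⟩
    · linear_combination -ha
    · linear_combination -hb
    · linear_combination (-(v 1 0 * v 1 0)) * ha - (t * t) * hc
    · linear_combination (-(v 0 1 * v 1 1)) * horth + (v 1 1 * v 1 1) * hb + (t * t) * hd

/-- For `1 < p < ∞`, `p ≠ 2`, every Auerbach basis of `l^2_p` is equivalent to the standard
basis or to `{(2^{-1/p}, 2^{-1/p}), (2^{-1/p}, -2^{-1/p})}`. -/
theorem stmt7 (p : ℝ) (hp : 1 < p) (hp2 : p ≠ 2) (v : Fin 2 → Fin 2 → ℝ)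
    (hv : IsAuerbach p v) :
    EquivBases v ![![1, 0], ![0, 1]] ∨
      EquivBases v
        ![![(2 : ℝ) ^ (-(1 / p)), (2 : ℝ) ^ (-(1 / p))],
          ![(2 : ℝ) ^ (-(1 / p)), -((2 : ℝ) ^ (-(1 / p)))]] := by
  have hp0 : p ≠ 0 := by positivity
  have hE : ∀ i j, i ≠ j →
      |v i 0| ^ (p - 2) * v i 0 * v j 0 + |v i 1| ^ (p - 2) * v i 1 * v j 1 = 0 :=
    fun i j hij ↦ by simpa only [Fin.sum_univ_two] using hv.sum_abs_rpow_mul_eq_zero hp hij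
  have hN : ∀ i, |v i 0| ^ p + |v i 1| ^ p = 1 := fun i ↦ by
    simpa only [Fin.sum_univ_two] using hv.sum_abs_rpow_eq_one hp0 i
  have hE₁ := hE 0 1 zero_ne_one
  have hE₂ := hE 1 0 one_ne_zero
  by_cases hzero : v 0 0 = 0 ∨ v 0 1 = 0 ∨ v 1 0 = 0 ∨ v 1 1 = 0
  · left
    rw [show ![![1, 0], ![0, 1]] = (1 : Matrix (Fin 2) (Fin 2) ℝ) from Matrix.one_fin_two.symm]
    rcases diag_or_antidiag_of_eq_zero hp0 hE₁ hE₂ (hN 0) (hN 1) hzero with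
      ⟨h01, h10, h00, h11⟩ | ⟨h00, h11, h01, h10⟩
    · exact equivBases_one_of_abs_eq_one 1 (by simp [Fin.forall_fin_two, h00, h11])
        (by simp [Fin.forall_fin_two, h01, h10])
    · exact equivBases_one_of_abs_eq_one (Equiv.swap 0 1) (by simp [Fin.forall_fin_two, h01, h10])
        (by simp [Fin.forall_fin_two, h00, h11])
  · right
    obtain ⟨ha, hb, hc, hd⟩ := by simpa only [not_or] using hzero
    obtain ⟨h00, h01, h10, h11, horth⟩ :=
      abs_eq_two_rpow_and_orthogonal hp0 hp2 hE₁ hE₂ (hN 0) (hN 1) ha hb hc hd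
    exact equivBases_hadamard (by positivity) h00 h01 h10 h11 horth
end

section
/- The two vectors (2^{-1/p}, 2^{-1/p}) and (2^{-1/p}, -2^{-1/p}) form an Auerbach basis of l^2_p for every 1 < p < ∞. -/
open Finset

lemma key_ineq (p : ℝ) (hp : 1 < p) (t : ℝ) :
    (2 : ℝ) ≤ |1 + t| ^ p + |1 - t| ^ p := by
  have h := (convexOn_rpow hp.le).2 (Set.mem_Ici.2 (abs_nonneg (1 + t)))
    (Set.mem_Ici.2 (abs_nonneg (1 - t))) (by norm_num : (0:ℝ) ≤ 1/2)
    (by norm_num : (0:ℝ) ≤ 1/2) (by norm_num)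
  simp only [smul_eq_mul] at h
  have h1 : (1 : ℝ) ≤ (1/2 * |1 + t| + 1/2 * |1 - t|) ^ p := by
    have h2 : (1 : ℝ) ≤ 1/2 * |1 + t| + 1/2 * |1 - t| := by
      have := abs_add_le (1 + t) (1 - t)
      have h3 : |(1 + t) + (1 - t)| = 2 := by norm_num
      linarith
    calc (1:ℝ) = 1 ^ p := (Real.one_rpow p).symm
    _ ≤ _ := Real.rpow_le_rpow (by norm_num) h2 (by linarith)
  nlinarith [h1.trans h]

lemma pnorm_pair (p : ℝ) (hp : 1 < p) (a b : ℝ) :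
    pnorm p ![a, b] = (|a| ^ p + |b| ^ p) ^ (1 / p) := by
  simp [pnorm, Fin.sum_univ_two]

/-- The vectors `(2^{-1/p}, 2^{-1/p})` and `(2^{-1/p}, -2^{-1/p})` form an Auerbach basis of
`l^2_p` for every `1 < p < ∞`. -/
theorem stmt8 (p : ℝ) (hp : 1 < p) :
    IsAuerbach p
      ![![(2 : ℝ) ^ (-(1 / p)), (2 : ℝ) ^ (-(1 / p))],
        ![(2 : ℝ) ^ (-(1 / p)), -((2 : ℝ) ^ (-(1 / p)))]] := by
  have hp0 : (0 : ℝ) < p := by linarith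
  set c : ℝ := (2 : ℝ) ^ (-(1 / p)) with hc
  have hcpos : 0 < c := Real.rpow_pos_of_pos (by norm_num) _
  have hcp : c ^ p = 1 / 2 := by
    rw [hc, ← Real.rpow_mul (by norm_num), show -(1/p) * p = -1 by field_simp]
    norm_num [Real.rpow_neg_one]
  have hpn : ∀ a b : ℝ, 2 ≤ |a| ^ p + |b| ^ p → 1 ≤ pnorm p ![c * a, c * b] := by
    intro a b h2
    rw [pnorm_pair p hp]
    have hma : |c * a| ^ p = c ^ p * |a| ^ p := by
      rw [abs_mul, abs_of_pos hcpos, Real.mul_rpow hcpos.le (abs_nonneg _)]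
    have hmb : |c * b| ^ p = c ^ p * |b| ^ p := by
      rw [abs_mul, abs_of_pos hcpos, Real.mul_rpow hcpos.le (abs_nonneg _)]
    have hbase : 1 ≤ |c * a| ^ p + |c * b| ^ p := by
      rw [hma, hmb, hcp]; linarith
    calc (1:ℝ) = 1 ^ (1/p) := (Real.one_rpow _).symm
    _ ≤ _ := Real.rpow_le_rpow (by norm_num) hbase (by positivity)
  have hone : pnorm p ![c, c] = 1 := by
    rw [pnorm_pair p hp, abs_of_pos hcpos, hcp]
    norm_num
  have hone' : pnorm p ![c, -c] = 1 := by
    rw [pnorm_pair p hp, abs_of_pos hcpos, abs_neg, abs_of_pos hcpos, hcp]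
    norm_num
  constructor
  · rw [LinearIndependent.pair_iff]
    intro s t hst
    have h0 := congrFun hst 0
    have h1 := congrFun hst 1
    simp [Pi.add_apply, Pi.smul_apply, smul_eq_mul] at h0 h1
    constructor <;> nlinarith [hcpos]
  · intro i
    fin_cases i
    · refine ⟨hone, ?_⟩
      intro w hw
      have hset : {j : Fin 2 | j ≠ 0} = {1} := by
        ext j; fin_cases j <;> simp
      have hw' : w ∈ Submodule.span ℝ
          ((![![c, c], ![c, -c]] : Fin 2 → Fin 2 → ℝ) '' {j | j ≠ 0}) := hw
      rw [hset, Set.image_singleton] at hw'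
      obtain ⟨t, rfl⟩ := Submodule.mem_span_singleton.1 hw'
      have heq : (![c, c] + t • ![c, -c]) = ![c * (1 + t), c * (1 - t)] := by
        funext i; fin_cases i <;> (simp [smul_eq_mul]; ring)
      show pnorm p ![c, c] ≤ pnorm p (![c, c] + t • ![c, -c])
      rw [hone, heq]
      exact hpn _ _ (key_ineq p hp t)
    · refine ⟨hone', ?_⟩
      intro w hw
      have hset : {j : Fin 2 | j ≠ 1} = {0} := by
        ext j; fin_cases j <;> simp
      have hw' : w ∈ Submodule.span ℝ
          ((![![c, c], ![c, -c]] : Fin 2 → Fin 2 → ℝ) '' {j | j ≠ 1}) := hw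
      rw [hset, Set.image_singleton] at hw'
      obtain ⟨t, rfl⟩ := Submodule.mem_span_singleton.1 hw'
      have heq : (![c, -c] + t • ![c, c]) = ![c * (1 + t), c * (t - 1)] := by
        funext i; fin_cases i <;> (simp [smul_eq_mul]; ring)
      show pnorm p ![c, -c] ≤ pnorm p (![c, -c] + t • ![c, c])
      rw [hone', heq]
      refine hpn _ _ ?_
      rw [abs_sub_comm t 1]
      exact key_ineq p hp t
end

section
/- If H is an n×n real matrix whose rows h_1, ..., h_n form an Auerbach basis of (ℝⁿ, ‖·‖), then the normalized rows (h_i, h_i)/2 and (h_i, -h_i)/2, i = 1, ..., n, of the 2n×2n block matrix [[H, H],[H, -H]] form an Auerbach basis of the ℓ_1 direct sum (ℝ^{2n}, ‖·‖ ⊕_1 ‖·‖), where ‖(x,y)‖ = ‖x‖ + ‖y‖. -/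
/-- Auerbach basis with respect to an abstract norm function `N`. -/
def IsAuerbachN {E : Type*} [AddCommGroup E] [Module ℝ E] (N : E → ℝ) {ι : Type*}
    (v : ι → E) : Prop :=
  LinearIndependent ℝ v ∧ ∀ i, N (v i) = 1 ∧
    ∀ w ∈ Submodule.span ℝ (v '' {j | j ≠ i}), N (v i) ≤ N (v i + w)

/-- The Sylvester construction: if the rows of `H` form an Auerbach basis of `(ℝⁿ, N)`, then
the normalized rows `(h_i, h_i)/2` and `(h_i, -h_i)/2` of `[[H,H],[H,-H]]` form an Auerbach
basis of the `ℓ_1`-direct sum `(ℝⁿ × ℝⁿ, N ⊕₁ N)`. -/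
theorem stmt10 {n : ℕ} (N : (Fin n → ℝ) → ℝ)
    (hN0 : ∀ x, N x = 0 ↔ x = 0)
    (hNs : ∀ (c : ℝ) (x : Fin n → ℝ), N (c • x) = |c| * N x)
    (hNt : ∀ x y : Fin n → ℝ, N (x + y) ≤ N x + N y)
    (H : Fin n → Fin n → ℝ) (hH : IsAuerbachN N H) :
    IsAuerbachN (fun z : (Fin n → ℝ) × (Fin n → ℝ) => N z.1 + N z.2)
      (Sum.elim (fun i : Fin n => ((2 : ℝ)⁻¹ • H i, (2 : ℝ)⁻¹ • H i))
        (fun i : Fin n => ((2 : ℝ)⁻¹ • H i, -((2 : ℝ)⁻¹ • H i)))) := by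
  obtain ⟨hli, hA⟩ := hH
  have hNneg : ∀ x : Fin n → ℝ, N (-x) = N x := by
    intro x
    have := hNs (-1) x
    simpa using this
  have hhalf : ∀ x : Fin n → ℝ, (2:ℝ)⁻¹ • x + (2:ℝ)⁻¹ • x = x := by
    intro x; rw [← add_smul]; norm_num
  set V : (Fin n) ⊕ (Fin n) → (Fin n → ℝ) × (Fin n → ℝ) :=
    Sum.elim (fun i : Fin n => ((2 : ℝ)⁻¹ • H i, (2 : ℝ)⁻¹ • H i))
      (fun i : Fin n => ((2 : ℝ)⁻¹ • H i, -((2 : ℝ)⁻¹ • H i))) with hV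
  constructor
  · -- linear independence
    rw [Fintype.linearIndependent_iff]
    intro g hg
    have h1 : ∑ j : (Fin n) ⊕ (Fin n), (g j • V j).1 = 0 := by
      rw [← Prod.fst_sum, hg]; simp
    have h2 : ∑ j : (Fin n) ⊕ (Fin n), (g j • V j).2 = 0 := by
      rw [← Prod.snd_sum, hg]; simp
    rw [Fintype.sum_sum_type] at h1 h2
    have e1 : ∑ i, ((g (Sum.inl i) + g (Sum.inr i)) * (2:ℝ)⁻¹) • H i = 0 := by
      rw [← h1, ← Finset.sum_add_distrib]
      refine Finset.sum_congr rfl fun i _ => ?_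
      simp only [hV, Sum.elim_inl, Sum.elim_inr, Prod.smul_mk]
      module
    have e2 : ∑ i, ((g (Sum.inl i) - g (Sum.inr i)) * (2:ℝ)⁻¹) • H i = 0 := by
      rw [← h2, ← Finset.sum_add_distrib]
      refine Finset.sum_congr rfl fun i _ => ?_
      simp only [hV, Sum.elim_inl, Sum.elim_inr, Prod.smul_mk]
      module
    have c1 := (Fintype.linearIndependent_iff.mp hli) _ e1
    have c2 := (Fintype.linearIndependent_iff.mp hli) _ e2
    intro j
    cases j with
    | inl i =>
      have a1 := c1 i; have a2 := c2 i
      have : g (Sum.inl i) + g (Sum.inr i) = 0 := by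
        have h2ne : ((2:ℝ)⁻¹) ≠ 0 := by norm_num
        exact (mul_eq_zero.mp a1).resolve_right h2ne
      have : g (Sum.inl i) - g (Sum.inr i) = 0 := by
        have h2ne : ((2:ℝ)⁻¹) ≠ 0 := by norm_num
        exact (mul_eq_zero.mp a2).resolve_right h2ne
      have hsum : g (Sum.inl i) + g (Sum.inr i) = 0 := by
        have h2ne : ((2:ℝ)⁻¹) ≠ 0 := by norm_num
        exact (mul_eq_zero.mp a1).resolve_right h2ne
      linarith
    | inr i =>
      have a1 := c1 i; have a2 := c2 i
      have h2ne : ((2:ℝ)⁻¹) ≠ 0 := by norm_num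
      have hs : g (Sum.inl i) + g (Sum.inr i) = 0 :=
        (mul_eq_zero.mp a1).resolve_right h2ne
      have hd : g (Sum.inl i) - g (Sum.inr i) = 0 :=
        (mul_eq_zero.mp a2).resolve_right h2ne
      linarith
  · intro i
    have hNunit : ∀ i, N (H i) = 1 := fun i => (hA i).1
    have hNhalf : ∀ i, N ((2:ℝ)⁻¹ • H i) = (2:ℝ)⁻¹ := by
      intro i
      rw [hNs, hNunit]
      norm_num
    cases i with
    | inl i₀ =>
      constructor
      · simp only [hV, Sum.elim_inl]
        rw [hNhalf]; norm_num
      · intro w hw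
        -- key: w.1 + w.2 ∈ span of other rows of H
        have key : w.1 + w.2 ∈ Submodule.span ℝ (H '' {j | j ≠ i₀}) := by
          have hle : Submodule.span ℝ (V '' {j | j ≠ Sum.inl i₀}) ≤
              (Submodule.span ℝ (H '' {j | j ≠ i₀})).comap
                (LinearMap.coprod (LinearMap.id : (Fin n → ℝ) →ₗ[ℝ] _) LinearMap.id) := by
            rw [Submodule.span_le]
            rintro z ⟨j, hj, rfl⟩
            cases j with
            | inl j₀ =>
              simp only [Submodule.mem_comap, hV, Sum.elim_inl, LinearMap.coprod_apply,
                LinearMap.id_coe, id_eq, SetLike.mem_coe]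
              rw [hhalf]
              exact Submodule.subset_span ⟨j₀, by simpa using hj, rfl⟩
            | inr j₀ =>
              simp only [Submodule.mem_comap, hV, Sum.elim_inr, LinearMap.coprod_apply,
                LinearMap.id_coe, id_eq, SetLike.mem_coe, add_neg_cancel]
              exact Submodule.zero_mem _
          exact hle hw
        have hBJ := (hA i₀).2 _ key
        simp only [hV, Sum.elim_inl]
        have heq : H i₀ + (w.1 + w.2) =
            ((2:ℝ)⁻¹ • H i₀ + w.1) + ((2:ℝ)⁻¹ • H i₀ + w.2) := by
          module
        have htri := hNt ((2:ℝ)⁻¹ • H i₀ + w.1) ((2:ℝ)⁻¹ • H i₀ + w.2)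
        rw [← heq] at htri
        have : N ((2:ℝ)⁻¹ • H i₀) + N ((2:ℝ)⁻¹ • H i₀) = N (H i₀) := by
          rw [hNhalf, hNunit]; norm_num
        simp only [Prod.fst_add, Prod.snd_add]
        calc N ((2:ℝ)⁻¹ • H i₀) + N ((2:ℝ)⁻¹ • H i₀) = N (H i₀) := this
          _ ≤ N (H i₀ + (w.1 + w.2)) := hBJ
          _ ≤ _ := htri
    | inr i₀ =>
      constructor
      · simp only [hV, Sum.elim_inr]
        rw [hNneg, hNhalf]; norm_num
      · intro w hw
        have key : w.1 - w.2 ∈ Submodule.span ℝ (H '' {j | j ≠ i₀}) := by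
          have hle : Submodule.span ℝ (V '' {j | j ≠ Sum.inr i₀}) ≤
              (Submodule.span ℝ (H '' {j | j ≠ i₀})).comap
                (LinearMap.coprod (LinearMap.id : (Fin n → ℝ) →ₗ[ℝ] _) (-LinearMap.id)) := by
            rw [Submodule.span_le]
            rintro z ⟨j, hj, rfl⟩
            cases j with
            | inl j₀ =>
              simp only [Submodule.mem_comap, hV, Sum.elim_inl, LinearMap.coprod_apply,
                LinearMap.id_coe, id_eq, SetLike.mem_coe, LinearMap.neg_apply, add_neg_cancel]
              exact Submodule.zero_mem _
            | inr j₀ =>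
              simp only [Submodule.mem_comap, hV, Sum.elim_inr, LinearMap.coprod_apply,
                LinearMap.id_coe, id_eq, SetLike.mem_coe, LinearMap.neg_apply, neg_neg]
              rw [hhalf]
              exact Submodule.subset_span ⟨j₀, by simpa using hj, rfl⟩
          have := hle hw
          simpa [Submodule.mem_comap, sub_eq_add_neg] using this
        have hBJ := (hA i₀).2 _ key
        simp only [hV, Sum.elim_inr]
        have heq : H i₀ + (w.1 - w.2) =
            ((2:ℝ)⁻¹ • H i₀ + w.1) + ((2:ℝ)⁻¹ • H i₀ - w.2) := by
          module
        have htri := hNt ((2:ℝ)⁻¹ • H i₀ + w.1) ((2:ℝ)⁻¹ • H i₀ - w.2)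
        rw [← heq] at htri
        have hflip : N (-((2:ℝ)⁻¹ • H i₀) + w.2) = N ((2:ℝ)⁻¹ • H i₀ - w.2) := by
          rw [← hNneg (-((2:ℝ)⁻¹ • H i₀) + w.2)]
          congr 1; module
        have hone : N ((2:ℝ)⁻¹ • H i₀) + N (-((2:ℝ)⁻¹ • H i₀)) = N (H i₀) := by
          rw [hNneg, hNhalf, hNunit]; norm_num
        simp only [Prod.fst_add, Prod.snd_add]
        calc N ((2:ℝ)⁻¹ • H i₀) + N (-((2:ℝ)⁻¹ • H i₀)) = N (H i₀) := hone
          _ ≤ N (H i₀ + (w.1 - w.2)) := hBJ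
          _ ≤ N ((2:ℝ)⁻¹ • H i₀ + w.1) + N ((2:ℝ)⁻¹ • H i₀ - w.2) := htri
          _ = N ((2:ℝ)⁻¹ • H i₀ + w.1) + N (-((2:ℝ)⁻¹ • H i₀) + w.2) := by rw [hflip]
end

section
/- For 1 < p < ∞ with p ≠ 2, a point x = (x_1,...,x_n) on the unit sphere of l^n_p is 'spherical' (i.e., x and its gradient vector (x_1|x_1|^{p-2},...,x_n|x_n|^{p-2}) are linearly dependent) if and only if there is a constant c such that each component x_i satisfies x_i = 0 or |x_i| = c. -/
open Finset

/-- For `1 < p < ∞`, `p ≠ 2`, a unit vector `x` of `l^n_p` is linearly dependent with its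
gradient vector `ᵖx = (x_i |x_i|^{p-2})_i` iff there is a constant `c` with each component
`x_i = 0` or `|x_i| = c`. -/
theorem stmt12 {n : ℕ} (p : ℝ) (hp : 1 < p) (hp2 : p ≠ 2) (x : Fin n → ℝ)
    (hx : pnorm p x = 1) :
    (∃ a b : ℝ, (a ≠ 0 ∨ b ≠ 0) ∧
        a • x + b • (fun i => x i * |x i| ^ (p - 2)) = 0) ↔
      ∃ c : ℝ, ∀ i, x i = 0 ∨ |x i| = c := by
  have hp0 : p ≠ 0 := by intro h; rw [h] at hp; linarith
  have hpm2 : p - 2 ≠ 0 := sub_ne_zero.mpr hp2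
  have hi0 : ∃ i, x i ≠ 0 := by
    by_contra h
    push_neg at h
    simp [pnorm, h, Real.zero_rpow hp0, Real.zero_rpow (inv_ne_zero hp0)] at hx
  obtain ⟨i0, hi0⟩ := hi0
  constructor
  · rintro ⟨a, b, hab, heq⟩
    have hpt : ∀ i, a * x i + b * (x i * |x i| ^ (p - 2)) = 0 := by
      intro i
      have := congrFun heq i
      simpa using this
    have hb : b ≠ 0 := by
      intro hb0
      have ha : a ≠ 0 := by
        rcases hab with h | h
        · exact h
        · exact absurd hb0 h
      have h := hpt i0
      rw [hb0] at h
      have : a * x i0 = 0 := by linarith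
      rcases mul_eq_zero.mp this with h' | h'
      · exact ha h'
      · exact hi0 h'
    have key : ∀ i, x i ≠ 0 → |x i| ^ (p - 2) = -a / b := by
      intro i hxi
      have h := hpt i
      have h2 : x i * (a + b * |x i| ^ (p - 2)) = 0 := by linear_combination h
      have h3 : a + b * |x i| ^ (p - 2) = 0 := by
        rcases mul_eq_zero.mp h2 with h' | h'
        · exact absurd h' hxi
        · exact h'
      field_simp
      linear_combination h3
    refine ⟨|x i0|, fun i => ?_⟩
    by_cases hxi : x i = 0
    · exact Or.inl hxi
    · right
      have e : |x i| ^ (p - 2) = |x i0| ^ (p - 2) :=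
        (key i hxi).trans (key i0 hi0).symm
      calc |x i| = (|x i| ^ (p - 2)) ^ (p - 2)⁻¹ :=
            (Real.rpow_rpow_inv (abs_nonneg _) hpm2).symm
        _ = (|x i0| ^ (p - 2)) ^ (p - 2)⁻¹ := by rw [e]
        _ = |x i0| := Real.rpow_rpow_inv (abs_nonneg _) hpm2
  · rintro ⟨c, hc⟩
    refine ⟨c ^ (p - 2), -1, Or.inr (by norm_num), ?_⟩
    funext i
    simp only [Pi.add_apply, Pi.smul_apply, smul_eq_mul, Pi.zero_apply]
    rcases hc i with h | h
    · simp [h]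
    · rw [h]; ring
end

section
/- Let 1 < p < ∞ with p ≠ 2, and suppose h : l^2_p → l^n_p is a linear isometry onto a two-dimensional subspace. Then the images h(e_1) and h(e_2) have disjoint supports. -/
/-!
Write `u = h e₁`, `v = h e₂` and `D_p(a, b) = |a + b|^p + |a - b|^p - 2|a|^p - 2|b|^p`
(`parallelogramDefect`).
Since `h` preserves `‖·‖_p^p` on `e₁`, `e₂`, `e₁ + e₂` and `e₁ - e₂`, we get
`∑ₖ D_p(u k, v k) = 2 + 2 - 2 - 2 = 0`. For `p ≠ 2` every `(p - 2) D_p(a, b)` is nonnegative and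
vanishes only when `a b = 0`: by homogeneity this reduces to `a = 1`, `b = t ∈ (0, 1]`, where
`(p - 2) D_p(1, t)` vanishes at `t = 0` and is strictly increasing, because `x ↦ x^(p-1)` is
subadditive for `p < 2` and superadditive for `p > 2`.
-/

open Finset

lemma pnorm_rpow {p : ℝ} (hp : p ≠ 0) {n : ℕ} (x : Fin n → ℝ) :
    pnorm p x ^ p = ∑ j, |x j| ^ p := by
  rw [pnorm, ← Real.rpow_mul (by positivity), one_div_mul_cancel hp, Real.rpow_one]

lemma sub_one_mul_rpow_one_add_sub_rpow_one_sub_sub_two_mul_rpow_pos {q t : ℝ} (hq : 0 < q)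
    (hq1 : q ≠ 1) (ht : 0 < t) (ht1 : t < 1) :
    0 < (q - 1) * ((1 + t) ^ q - (1 - t) ^ q - 2 * t ^ q) := by
  have hsplit : 1 + t = (1 - t) + 2 * t := by ring
  have h2t : (2 * t) ^ q = 2 ^ q * t ^ q := Real.mul_rpow zero_le_two ht.le
  have htq : 0 < t ^ q := Real.rpow_pos_of_pos ht q
  rcases hq1.lt_or_gt with hq1 | hq1
  · have hsub : (1 + t) ^ q ≤ (1 - t) ^ q + (2 * t) ^ q := by
      rw [hsplit]; exact Real.rpow_add_le_add_rpow (by linarith) (by linarith) hq.le hq1.le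
    have h2 : (2 : ℝ) ^ q < 2 := Real.rpow_lt_self_of_one_lt one_lt_two hq1
    refine mul_pos_of_neg_of_neg (by linarith) ?_
    nlinarith
  · have hsuper : (1 - t) ^ q + (2 * t) ^ q ≤ (1 + t) ^ q := by
      rw [hsplit]; exact Real.add_rpow_le_rpow_add (by linarith) (by linarith) hq1.le
    have h2 : (2 : ℝ) < 2 ^ q := Real.self_lt_rpow_of_one_lt one_lt_two hq1
    refine mul_pos (by linarith) ?_
    nlinarith

noncomputable def parallelogramDefect (p a b : ℝ) : ℝ :=
  |a + b| ^ p + |a - b| ^ p - 2 * |a| ^ p - 2 * |b| ^ p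

section parallelogramDefect

variable {p : ℝ}

lemma parallelogramDefect_comm (a b : ℝ) :
    parallelogramDefect p a b = parallelogramDefect p b a := by
  simp only [parallelogramDefect, add_comm b a, abs_sub_comm b a]
  ring

lemma parallelogramDefect_neg_right (a b : ℝ) :
    parallelogramDefect p a (-b) = parallelogramDefect p a b := by
  simp only [parallelogramDefect, ← sub_eq_add_neg, sub_neg_eq_add, abs_neg]
  ring

lemma parallelogramDefect_neg_left (a b : ℝ) :
    parallelogramDefect p (-a) b = parallelogramDefect p a b := by
  rw [parallelogramDefect_comm, parallelogramDefect_neg_right, parallelogramDefect_comm]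

lemma parallelogramDefect_abs_abs (a b : ℝ) :
    parallelogramDefect p |a| |b| = parallelogramDefect p a b := by
  rcases abs_choice a with ha | ha <;> rcases abs_choice b with hb | hb <;>
    simp only [ha, hb, parallelogramDefect_neg_left, parallelogramDefect_neg_right]

lemma parallelogramDefect_mul_mul {c : ℝ} (hc : 0 ≤ c) (a b : ℝ) :
    parallelogramDefect p (c * a) (c * b) = c ^ p * parallelogramDefect p a b := by
  simp only [parallelogramDefect, ← mul_add, ← mul_sub, abs_mul, abs_of_nonneg hc,
    Real.mul_rpow hc (abs_nonneg _)]
  ring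

lemma parallelogramDefect_zero_right (hp : p ≠ 0) (a : ℝ) : parallelogramDefect p a 0 = 0 := by
  simp only [parallelogramDefect, add_zero, sub_zero, abs_zero, Real.zero_rpow hp]
  ring

lemma parallelogramDefect_zero_left (hp : p ≠ 0) (b : ℝ) : parallelogramDefect p 0 b = 0 := by
  rw [parallelogramDefect_comm, parallelogramDefect_zero_right hp]

lemma parallelogramDefect_one_of_mem_Icc {t : ℝ} (ht : t ∈ Set.Icc (0 : ℝ) 1) :
    parallelogramDefect p 1 t = (1 + t) ^ p + (1 - t) ^ p - 2 - 2 * t ^ p := by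
  simp only [parallelogramDefect, abs_one, Real.one_rpow, abs_of_nonneg ht.1,
    abs_of_nonneg (sub_nonneg.2 ht.2), abs_of_nonneg (by linarith [ht.1] : 0 ≤ 1 + t)]
  ring

lemma sub_two_mul_parallelogramDefect_one_pos {t : ℝ} (hp : 1 < p) (hp2 : p ≠ 2) (ht : 0 < t)
    (ht1 : t ≤ 1) : 0 < (p - 2) * parallelogramDefect p 1 t := by
  set φ : ℝ → ℝ := fun s => (p - 2) * ((1 + s) ^ p + (1 - s) ^ p - 2 - 2 * s ^ p)
  have hφ' (s : ℝ) : HasDerivAt φ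
      ((p - 2) * (p * ((1 + s) ^ (p - 1) - (1 - s) ^ (p - 1) - 2 * s ^ (p - 1)))) s := by
    have h1 := ((hasDerivAt_id s).const_add 1).rpow_const (p := p) (Or.inr hp.le)
    have h2 := ((hasDerivAt_id s).const_sub 1).rpow_const (p := p) (Or.inr hp.le)
    have h3 := (hasDerivAt_id s).rpow_const (p := p) (Or.inr hp.le)
    refine ((((h1.add h2).sub_const 2).sub (h3.const_mul 2)).const_mul (p - 2)).congr_deriv ?_
    simp only [id]
    ring
  have hmono : StrictMonoOn φ (Set.Icc 0 1) := by
    refine strictMonoOn_of_deriv_pos (convex_Icc 0 1)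
      (fun s _ => (hφ' s).continuousAt.continuousWithinAt) fun s hs => ?_
    rw [interior_Icc] at hs
    have hbracket := sub_one_mul_rpow_one_add_sub_rpow_one_sub_sub_two_mul_rpow_pos
      (q := p - 1) (by linarith) (by contrapose! hp2; linarith) hs.1 hs.2
    rw [show p - 1 - 1 = p - 2 by ring] at hbracket
    rw [(hφ' s).deriv, mul_left_comm]
    exact mul_pos (by linarith) hbracket
  have hφ0 : φ 0 = 0 := by
    norm_num [φ, Real.zero_rpow (by positivity : p ≠ 0)]
  rw [parallelogramDefect_one_of_mem_Icc ⟨ht.le, ht1⟩]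
  simpa [hφ0] using hmono (Set.left_mem_Icc.2 zero_le_one) ⟨ht.le, ht1⟩ ht

lemma sub_two_mul_parallelogramDefect_pos_of_le {a b : ℝ} (hp : 1 < p) (hp2 : p ≠ 2)
    (hb : 0 < b) (hba : b ≤ a) : 0 < (p - 2) * parallelogramDefect p a b := by
  have ha : 0 < a := hb.trans_le hba
  have ht : b / a ∈ Set.Icc (0 : ℝ) 1 := ⟨(div_pos hb ha).le, (div_le_one ha).2 hba⟩
  have hscale : parallelogramDefect p a b = a ^ p * parallelogramDefect p 1 (b / a) := by
    rw [← parallelogramDefect_mul_mul ha.le, mul_one, mul_div_cancel₀ b ha.ne']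
  rw [hscale, mul_left_comm]
  exact mul_pos (Real.rpow_pos_of_pos ha p)
    (sub_two_mul_parallelogramDefect_one_pos hp hp2 (div_pos hb ha) ht.2)

lemma sub_two_mul_parallelogramDefect_pos {a b : ℝ} (hp : 1 < p) (hp2 : p ≠ 2) (ha : a ≠ 0)
    (hb : b ≠ 0) : 0 < (p - 2) * parallelogramDefect p a b := by
  rw [← parallelogramDefect_abs_abs]
  rcases le_total |b| |a| with hba | hab
  · exact sub_two_mul_parallelogramDefect_pos_of_le hp hp2 (abs_pos.2 hb) hba
  · rw [parallelogramDefect_comm]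
    exact sub_two_mul_parallelogramDefect_pos_of_le hp hp2 (abs_pos.2 ha) hab

lemma sub_two_mul_parallelogramDefect_nonneg (hp : 1 < p) (hp2 : p ≠ 2) (a b : ℝ) :
    0 ≤ (p - 2) * parallelogramDefect p a b := by
  have hp0 : p ≠ 0 := by positivity
  rcases eq_or_ne a 0 with rfl | ha
  · simp [parallelogramDefect_zero_left hp0]
  rcases eq_or_ne b 0 with rfl | hb
  · simp [parallelogramDefect_zero_right hp0]
  exact (sub_two_mul_parallelogramDefect_pos hp hp2 ha hb).le

end parallelogramDefect

/-- For `1 < p < ∞`, `p ≠ 2`, if `h : l^2_p → l^n_p` is a linear isometry, then the images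
of the two standard basis vectors have disjoint supports. -/
theorem stmt14 {n : ℕ} (p : ℝ) (hp : 1 < p) (hp2 : p ≠ 2)
    (h : (Fin 2 → ℝ) →ₗ[ℝ] (Fin n → ℝ))
    (hiso : ∀ c : Fin 2 → ℝ, pnorm p (h c) = pnorm p c) :
    ∀ k, h (Pi.single 0 1) k * h (Pi.single 1 1) k = 0 := by
  have hp0 : p ≠ 0 := by positivity
  set u := h (Pi.single 0 1)
  set v := h (Pi.single 1 1)
  have hsum (a b : ℝ) : ∑ j, |a * u j + b * v j| ^ p = |a| ^ p + |b| ^ p := by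
    have hc : h (a • Pi.single 0 1 + b • Pi.single 1 1) = a • u + b • v := by
      rw [map_add, map_smul, map_smul]
    have := congrArg (· ^ p) (hiso (a • Pi.single 0 1 + b • Pi.single 1 1))
    simpa [pnorm_rpow hp0, hc, Fin.sum_univ_two] using this
  have hu : ∑ j, |u j| ^ p = 1 := by simpa [Real.zero_rpow hp0] using hsum 1 0
  have hv : ∑ j, |v j| ^ p = 1 := by simpa [Real.zero_rpow hp0] using hsum 0 1
  have hadd : ∑ j, |u j + v j| ^ p = 2 := by simpa [one_add_one_eq_two] using hsum 1 1
  have hsub : ∑ j, |u j - v j| ^ p = 2 := by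
    simpa [one_add_one_eq_two, ← sub_eq_add_neg] using hsum 1 (-1)
  have hdefect : ∑ j, (p - 2) * parallelogramDefect p (u j) (v j) = 0 := by
    simp only [← mul_sum, parallelogramDefect, sum_sub_distrib, sum_add_distrib, hu, hv, hadd,
      hsub]
    norm_num
  intro k
  by_contra hk
  obtain ⟨huk, hvk⟩ := mul_ne_zero_iff.1 hk
  have hzero := (sum_eq_zero_iff_of_nonneg fun j _ =>
    sub_two_mul_parallelogramDefect_nonneg hp hp2 (u j) (v j)).1 hdefect k (mem_univ k)
  exact (sub_two_mul_parallelogramDefect_pos hp hp2 huk hvk).ne' hzero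
end

section
/- For 1 < p < ∞ with p ≠ 2, a spherical point on the unit sphere of l^2_p (a unit vector x such that x and (x_1|x_1|^{p-2}, x_2|x_2|^{p-2}) are linearly dependent) must equal one of ±e_1, ±e_2, or ±2^{-1/p}(e_1 ± e_2). -/
open Finset

/-!
If `a • x + b • ᵖx = 0` with `(a, b) ≠ 0`, then `b ≠ 0` and every nonzero coordinate satisfies
`|x_i| ^ (p - 2) = -a / b`. For `p ≠ 2` the map `t ↦ t ^ (p - 2)` is injective on `[0, ∞)`, so
all nonzero coordinates have the same modulus. In `ℝ²` this leaves either one coordinate zero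
(and the other `±1`), or `|x_1| = |x_2|` with `2 |x_1| ^ p = 1`.
-/

lemma sum_abs_rpow_eq_one_of_pnorm_eq_one {p : ℝ} (hp : p ≠ 0) {n : ℕ} {x : Fin n → ℝ}
    (hx : pnorm p x = 1) : ∑ j, |x j| ^ p = 1 := by
  have hnonneg : 0 ≤ ∑ j, |x j| ^ p := by positivity
  rw [pnorm, one_div] at hx
  simpa [Real.rpow_inv_rpow hnonneg hp] using congrArg (· ^ p) hx

lemma abs_eq_abs_of_smul_add_smul_eq_zero {p : ℝ} (hp : p ≠ 2) {n : ℕ} {x : Fin n → ℝ}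
    {a b : ℝ} (hab : a ≠ 0 ∨ b ≠ 0) (hdep : a • x + b • (fun i => x i * |x i| ^ (p - 2)) = 0)
    {i j : Fin n} (hi : x i ≠ 0) (hj : x j ≠ 0) : |x i| = |x j| := by
  have hcoord : ∀ k, x k * (a + b * |x k| ^ (p - 2)) = 0 := fun k => by
    have hk := congrFun hdep k
    simp only [Pi.add_apply, Pi.smul_apply, smul_eq_mul, Pi.zero_apply] at hk
    linear_combination hk
  have hb : b ≠ 0 := by
    rintro rfl
    simp only [ne_eq, not_true_eq_false, or_false] at hab
    simpa [hi, hab] using hcoord i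
  have hpow : ∀ k, x k ≠ 0 → |x k| ^ (p - 2) = -a / b := fun k hk => by
    rw [eq_div_iff hb]
    linear_combination (mul_eq_zero.mp (hcoord k)).resolve_left hk
  rw [← Real.rpow_left_inj (abs_nonneg _) (abs_nonneg _) (sub_ne_zero.mpr hp), hpow i hi,
    hpow j hj]

lemma eq_vec2_of_apply_eq {α : Type*} {x : Fin 2 → α} {s t : α} (h0 : x 0 = s) (h1 : x 1 = t) :
    x = ![s, t] := by
  rw [← h0, ← h1]
  exact (FinVec.etaExpand_eq x).symm

lemma eq_or_eq_neg_of_abs_rpow_eq {p c t : ℝ} (hp : p ≠ 0) (hc : 0 ≤ c) (h : |t| ^ p = c ^ p) :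
    t = c ∨ t = -c :=
  abs_eq hc |>.mp <| (Real.rpow_left_inj (abs_nonneg t) hc hp).mp h

/-- For `1 < p < ∞`, `p ≠ 2`, a spherical point of the unit sphere of `l^2_p` (a unit vector
`x` linearly dependent with `(x_1|x_1|^{p-2}, x_2|x_2|^{p-2})`) is one of
`±e_1, ±e_2, ±2^{-1/p}(e_1 ± e_2)`. -/
theorem stmt15 (p : ℝ) (hp : 1 < p) (hp2 : p ≠ 2) (x : Fin 2 → ℝ)
    (hx : pnorm p x = 1)
    (hdep : ∃ a b : ℝ, (a ≠ 0 ∨ b ≠ 0) ∧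
      a • x + b • (fun i => x i * |x i| ^ (p - 2)) = 0) :
    x = ![1, 0] ∨ x = ![-1, 0] ∨ x = ![0, 1] ∨ x = ![0, -1] ∨
      x = ![(2 : ℝ) ^ (-(1 / p)), (2 : ℝ) ^ (-(1 / p))] ∨
      x = ![(2 : ℝ) ^ (-(1 / p)), -((2 : ℝ) ^ (-(1 / p)))] ∨
      x = ![-((2 : ℝ) ^ (-(1 / p))), (2 : ℝ) ^ (-(1 / p))] ∨
      x = ![-((2 : ℝ) ^ (-(1 / p))), -((2 : ℝ) ^ (-(1 / p)))] := by
  have hp0 : p ≠ 0 := (zero_lt_one.trans hp).ne'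
  have hsum := sum_abs_rpow_eq_one_of_pnorm_eq_one hp0 hx
  rw [Fin.sum_univ_two] at hsum
  obtain ⟨a, b, hab, hdep⟩ := hdep
  by_cases h0 : x 0 = 0
  · obtain h1 | h1 := eq_or_eq_neg_of_abs_rpow_eq hp0 zero_le_one
      (by simpa [h0, hp0] using hsum : |x 1| ^ p = 1 ^ p)
    all_goals simp [eq_vec2_of_apply_eq h0 h1]
  by_cases h1 : x 1 = 0
  · obtain h0' | h0' := eq_or_eq_neg_of_abs_rpow_eq hp0 zero_le_one
      (by simpa [h1, hp0] using hsum : |x 0| ^ p = 1 ^ p)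
    all_goals simp [eq_vec2_of_apply_eq h0' h1]
  have h01 := abs_eq_abs_of_smul_add_smul_eq_zero hp2 hab hdep h0 h1
  have hc : ((2 : ℝ) ^ (-(1 / p))) ^ p = 1 / 2 := by
    rw [← Real.rpow_mul zero_le_two, neg_mul, one_div_mul_cancel hp0, Real.rpow_neg_one,
      one_div]
  have hx1 : |x 1| ^ p = ((2 : ℝ) ^ (-(1 / p))) ^ p := by
    rw [h01] at hsum
    linarith
  have hx0 : |x 0| ^ p = ((2 : ℝ) ^ (-(1 / p))) ^ p := h01 ▸ hx1
  obtain h0' | h0' := eq_or_eq_neg_of_abs_rpow_eq hp0 (by positivity) hx0 <;>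
  obtain h1' | h1' := eq_or_eq_neg_of_abs_rpow_eq hp0 (by positivity) hx1 <;>
  simp [eq_vec2_of_apply_eq h0' h1']
end

section
/- For p ≥ 2 and parameters 0 < s ≤ t ≤ 1 with s^p + t^p > 1, if ((1-s^p)/t^p)^p > t then s + t x^p > (t^p x + s^p)^p for all x ∈ [0,1]. -/
open Real Set

/-- For `p ≥ 2`, `0 < s ≤ t ≤ 1` with `s^p + t^p > 1` and `((1-s^p)/t^p)^p > t`, the
inequality `s + t x^p > (t^p x + s^p)^p` holds for all `x ∈ [0,1]`. -/
theorem stmt16 (p s t : ℝ) (hp : 2 ≤ p) (hs : 0 < s) (hst : s ≤ t) (ht : t ≤ 1)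
    (hsum : 1 < s ^ p + t ^ p) (hcond : t < ((1 - s ^ p) / t ^ p) ^ p) :
    ∀ x ∈ Set.Icc (0 : ℝ) 1, (t ^ p * x + s ^ p) ^ p < s + t * x ^ p := by
  intro x hx
  obtain ⟨hx0, hx1⟩ := hx
  have hp0 : (0:ℝ) < p := by linarith
  have hp1 : (1:ℝ) < p := by linarith
  have ht0 : 0 < t := lt_of_lt_of_le hs hst
  have htp : 0 < t ^ p := Real.rpow_pos_of_pos ht0 p
  have hs1 : s ≤ 1 := hst.trans ht
  have hsp1 : s ^ p ≤ 1 := Real.rpow_le_one hs.le hs1 hp0.le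
  have hb0 : 0 ≤ (1 - s ^ p) / t ^ p := div_nonneg (by linarith) htp.le
  have hb1 : (1 - s ^ p) / t ^ p < 1 := by
    rw [div_lt_one htp]; linarith
  have ht1 : t < 1 :=
    lt_of_lt_of_le hcond (Real.rpow_le_one hb0 hb1.le hp0.le)
  have h1 : t ^ p⁻¹ < (1 - s ^ p) / t ^ p := by
    have := Real.rpow_lt_rpow ht0.le hcond (by positivity : (0:ℝ) < p⁻¹)
    rwa [Real.rpow_rpow_inv hb0 hp0.ne'] at this
  have h2 : t ^ (p⁻¹ + p) < 1 - s ^ p := by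
    rw [Real.rpow_add ht0]
    calc t ^ p⁻¹ * t ^ p < ((1 - s ^ p) / t ^ p) * t ^ p :=
          (mul_lt_mul_iff_left₀ htp).mpr h1
      _ = 1 - s ^ p := div_mul_cancel₀ _ htp.ne'
  have h3 : t ^ (p + 1) ≤ t ^ (p⁻¹ + p) := by
    apply Real.rpow_le_rpow_of_exponent_ge ht0 ht1.le
    have hpi : p⁻¹ ≤ 1 := by
      rw [inv_le_one_iff₀]; right; linarith
    linarith
  have h4 : s ^ (p + 1) ≤ s ^ p :=
    Real.rpow_le_rpow_of_exponent_ge hs hs1 (by linarith)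
  have hkey : s ^ (p + 1) + t ^ (p + 1) < 1 := by linarith
  set w2 : ℝ := t ^ (p + 1) with hw2def
  set w1 : ℝ := 1 - w2 with hw1def
  have hw2 : 0 < w2 := Real.rpow_pos_of_pos ht0 _
  have hw2' : w2 < 1 := Real.rpow_lt_one ht0.le ht1 (by linarith)
  have hw1 : 0 < w1 := by simp only [hw1def]; linarith
  have hsp0 : 0 < s ^ p := Real.rpow_pos_of_pos hs p
  -- Jensen / convexity step
  have hJ := (convexOn_rpow hp1.le).2
      (show s ^ p / w1 ∈ Ici (0:ℝ) from Set.mem_Ici.mpr (by positivity))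
      (show t ^ p * x / w2 ∈ Ici (0:ℝ) from Set.mem_Ici.mpr (by positivity))
      hw1.le hw2.le (by ring)
  simp only [smul_eq_mul] at hJ
  rw [show w1 * (s ^ p / w1) = s ^ p from by field_simp,
      show w2 * (t ^ p * x / w2) = t ^ p * x from by field_simp] at hJ
  -- hJ : (s^p + t^p*x)^p ≤ w1 * (s^p/w1)^p + w2 * (t^p*x/w2)^p
  have hwp1 : 0 < w1 ^ (p - 1) := Real.rpow_pos_of_pos hw1 _
  have hterm1 : w1 * (s ^ p / w1) ^ p < s := by
    rw [Real.div_rpow hsp0.le hw1.le]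
    have hw1p : w1 * w1 ^ (p - 1) = w1 ^ p := by
      rw [Real.rpow_sub hw1, Real.rpow_one]
      field_simp
    rw [← hw1p]
    have hne : w1 * (w1 * w1 ^ (p - 1)) ≠ 0 := by positivity
    rw [show w1 * ((s ^ p) ^ p / (w1 * w1 ^ (p - 1))) = (s ^ p) ^ p / w1 ^ (p - 1) from by
      field_simp]
    rw [div_lt_iff₀ hwp1]
    have hspp : (s ^ p) ^ p = s * (s ^ (p + 1)) ^ (p - 1) := by
      rw [← Real.rpow_mul hs.le, ← Real.rpow_mul hs.le,
          show s * s ^ ((p + 1) * (p - 1)) = s ^ (1 + (p + 1) * (p - 1)) from by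
            rw [Real.rpow_add hs, Real.rpow_one]]
      congr 1; ring
    rw [hspp]
    have hlt : (s ^ (p + 1)) ^ (p - 1) < w1 ^ (p - 1) :=
      Real.rpow_lt_rpow (by positivity) (by linarith) (by linarith)
    exact (mul_lt_mul_iff_right₀ hs).mpr hlt
  have hterm2 : w2 * (t ^ p * x / w2) ^ p = t * x ^ p := by
    rw [Real.div_rpow (by positivity) hw2.le, Real.mul_rpow htp.le hx0,
        ← Real.rpow_mul ht0.le, hw2def, ← Real.rpow_mul ht0.le]
    have hcoef : t ^ (p + 1) * t ^ (p * p) / t ^ ((p + 1) * p) = t := by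
      rw [← Real.rpow_add ht0, ← Real.rpow_sub ht0]
      rw [show p + 1 + p * p - (p + 1) * p = 1 from by ring, Real.rpow_one]
    calc t ^ (p + 1) * (t ^ (p * p) * x ^ p / t ^ ((p + 1) * p))
        = (t ^ (p + 1) * t ^ (p * p) / t ^ ((p + 1) * p)) * x ^ p := by ring
      _ = t * x ^ p := by rw [hcoef]
  calc (t ^ p * x + s ^ p) ^ p = (s ^ p + t ^ p * x) ^ p := by ring_nf
    _ ≤ w1 * (s ^ p / w1) ^ p + w2 * (t ^ p * x / w2) ^ p := hJ
    _ = w1 * (s ^ p / w1) ^ p + t * x ^ p := by rw [hterm2]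
    _ < s + t * x ^ p := by linarith
end
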